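/- Fix d ≥ 1. Let A_1 = B_1 = A_2 = B_2 = Fin d and P = F = Fin d × Fin 2. Define the vector v indexed by P × A_1 × B_1 × A_2 × B_2 × F by v((m,c),a_1,b_1,a_2,b_2,(n,c')) = [c = 0 and c' = 0 and a_1 = m and a_2 = b_1 and n = b_2] + [c = 1 and c' = 1 and b_2 = m and b_1 = a_2 and a_1 = n] (Iverson brackets), and let R be the rank-one PSD matrix with entries R(u,u') = v(u)·conj(v(u')) (the Choi operator of the flippable quantum SWITCH). Then for every pair of bistochastic channel Choi operators C_1 (indexed by A_1 × B_1) and C_2 (indexed by A_2 × B_2), the matrix W indexed by P × F with entries W((p,f),(p',f')) = Σ R((p,a_1,b_1,a_2,b_2,f),(p',a_1',b_1',a_2',b_2',f'))·C_1((a_1,b_1),(a_1',b_1'))·C_2((a_2,b_2),(a_2',b_2')) (sum over all primed and unprimed a,b indices) is positive semidefinite and satisfies Tr_F[W] = 1_P; that is, W is the Choi operator of a quantum channel from P to F. -/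

import Mathlib

/-! Because `R = v v†` has rank one, `W = N (C1 ⊗ C2) N†` where `N` is `v` reshaped into a matrix
from `(A1 × B1) × (A2 × B2)` to `P × F`, so `W` is positive semidefinite.
The vector `v` vanishes unless the control bits of `P` and `F` agree, so `Tr_F[W]` is block diagonal.
In the `0` block the channels act in the order `C1`, `C2` and the trace-preserving conditions of
`C2` and then `C1` give `1`; in the `1` block both channels are traversed backwards, and it is
their unitality that gives `1`. -/

open Matrix ComplexOrder

/-- The vector defining the flippable quantum SWITCH: for
`u = ((m,c), a1, b1, a2, b2, (n,c'))`,
`v u = [c = 0 ∧ c' = 0 ∧ a1 = m ∧ a2 = b1 ∧ n = b2] + [c = 1 ∧ c' = 1 ∧ b2 = m ∧ b1 = a2 ∧ a1 = n]`. -/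
noncomputable def flipSwitchVec (d : ℕ) :
    ((Fin d × Fin 2) × Fin d × Fin d × Fin d × Fin d × (Fin d × Fin 2)) → ℂ :=
  fun u =>
    (if u.1.2 = 0 ∧ u.2.2.2.2.2.2 = 0 ∧ u.2.1 = u.1.1 ∧ u.2.2.2.1 = u.2.2.1 ∧
        u.2.2.2.2.2.1 = u.2.2.2.2.1 then 1 else 0) +
    (if u.1.2 = 1 ∧ u.2.2.2.2.2.2 = 1 ∧ u.2.2.2.2.1 = u.1.1 ∧ u.2.2.1 = u.2.2.2.1 ∧
        u.2.1 = u.2.2.2.2.2.1 then 1 else 0)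

/-- The Choi operator of the flippable quantum SWITCH. -/
noncomputable def flipSwitchChoi (d : ℕ) :
    Matrix ((Fin d × Fin 2) × Fin d × Fin d × Fin d × Fin d × (Fin d × Fin 2))
      ((Fin d × Fin 2) × Fin d × Fin d × Fin d × Fin d × (Fin d × Fin 2)) ℂ :=
  Matrix.of fun u u' => flipSwitchVec d u * (starRingEnd ℂ) (flipSwitchVec d u')

/-- The result `W` of plugging two channels `C1`, `C2` into a bipartite supermap `R`. -/
noncomputable def link2PF {P A1 B1 A2 B2 F : Type*}
    [Fintype A1] [Fintype B1] [Fintype A2] [Fintype B2]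
    (R : Matrix (P × A1 × B1 × A2 × B2 × F) (P × A1 × B1 × A2 × B2 × F) ℂ)
    (C1 : Matrix (A1 × B1) (A1 × B1) ℂ) (C2 : Matrix (A2 × B2) (A2 × B2) ℂ) :
    Matrix (P × F) (P × F) ℂ :=
  Matrix.of fun (u u' : P × F) =>
    ∑ a1 : A1, ∑ b1 : B1, ∑ a2 : A2, ∑ b2 : B2,
    ∑ a1' : A1, ∑ b1' : B1, ∑ a2' : A2, ∑ b2' : B2,
      R (u.1, a1, b1, a2, b2, u.2) (u'.1, a1', b1', a2', b2', u'.2) *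
        C1 (a1, b1) (a1', b1') * C2 (a2, b2) (a2', b2')

open scoped Kronecker

section RankOne

variable {P A1 B1 A2 B2 F : Type*} [Fintype A1] [Fintype B1] [Fintype A2] [Fintype B2]

def reshapePF (v : P × A1 × B1 × A2 × B2 × F → ℂ) :
    Matrix (P × F) ((A1 × B1) × (A2 × B2)) ℂ :=
  of fun u x => v (u.1, x.1.1, x.1.2, x.2.1, x.2.2, u.2)

theorem link2PF_vecMulVec (v : P × A1 × B1 × A2 × B2 × F → ℂ)
    (C1 : Matrix (A1 × B1) (A1 × B1) ℂ) (C2 : Matrix (A2 × B2) (A2 × B2) ℂ) :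
    link2PF (vecMulVec v (star v)) C1 C2 = reshapePF v * (C1 ⊗ₖ C2) * (reshapePF v)ᴴ := by
  rw [Matrix.mul_assoc]
  ext u u'
  simp only [link2PF, reshapePF, vecMulVec, mul_apply, of_apply, conjTranspose_apply,
    kroneckerMap_apply, Fintype.sum_prod_type, Finset.mul_sum, Pi.star_apply]
  ac_rfl

theorem posSemidef_link2PF_vecMulVec [Finite P] [Finite F] (v : P × A1 × B1 × A2 × B2 × F → ℂ)
    {C1 : Matrix (A1 × B1) (A1 × B1) ℂ} {C2 : Matrix (A2 × B2) (A2 × B2) ℂ}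
    (hC1 : C1.PosSemidef) (hC2 : C2.PosSemidef) :
    (link2PF (vecMulVec v (star v)) C1 C2).PosSemidef := by
  rw [link2PF_vecMulVec]
  exact (hC1.kronecker hC2).mul_mul_conjTranspose_same _

end RankOne

theorem sum_sum_sum_mul_eq_sum_diag {R ι κ : Type*} [Semiring R] [Fintype ι] [Fintype κ]
    [DecidableEq ι] (X : ι → ι → R) (Y : ι → κ → ι → κ → R)
    (hY : ∀ i i', ∑ k, Y i k i' k = if i = i' then 1 else 0) :
    ∑ k, ∑ i, ∑ i', X i i' * Y i k i' k = ∑ i, X i i := by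
  calc ∑ k, ∑ i, ∑ i', X i i' * Y i k i' k = ∑ i, ∑ i', X i i' * ∑ k, Y i k i' k := by
        simp only [Finset.mul_sum]
        rw [Finset.sum_comm]
        exact Finset.sum_congr rfl fun _ _ => Finset.sum_comm
    _ = ∑ i, X i i := by simp [hY]

section FlipSwitch

variable {d : ℕ}

theorem flipSwitchChoi_eq_vecMulVec :
    flipSwitchChoi d = vecMulVec (flipSwitchVec d) (star (flipSwitchVec d)) :=
  rfl

theorem flipSwitchVec_zero_zero (m n a1 b1 a2 b2 : Fin d) :
    flipSwitchVec d ((m, 0), a1, b1, a2, b2, (n, 0)) =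
      if a1 = m ∧ a2 = b1 ∧ n = b2 then 1 else 0 := by
  simp [flipSwitchVec]

theorem flipSwitchVec_one_one (m n a1 b1 a2 b2 : Fin d) :
    flipSwitchVec d ((m, 1), a1, b1, a2, b2, (n, 1)) =
      if b2 = m ∧ b1 = a2 ∧ a1 = n then 1 else 0 := by
  simp [flipSwitchVec]

theorem flipSwitchVec_of_ne {c e : Fin 2} (h : c ≠ e) (m n a1 b1 a2 b2 : Fin d) :
    flipSwitchVec d ((m, c), a1, b1, a2, b2, (n, e)) = 0 := by
  fin_cases c <;> fin_cases e <;> simp_all [flipSwitchVec]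

variable (C1 C2 : Matrix (Fin d × Fin d) (Fin d × Fin d) ℂ)

theorem link2PF_flipSwitchChoi_of_ne_left {c e : Fin 2} (h : c ≠ e) (m n : Fin d)
    (u' : (Fin d × Fin 2) × (Fin d × Fin 2)) :
    link2PF (flipSwitchChoi d) C1 C2 ((m, c), (n, e)) u' = 0 := by
  rw [flipSwitchChoi_eq_vecMulVec, link2PF_vecMulVec, Matrix.mul_assoc, mul_apply]
  simp [reshapePF, flipSwitchVec_of_ne h]

theorem link2PF_flipSwitchChoi_of_ne_right {c e : Fin 2} (h : c ≠ e) (m n : Fin d)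
    (u : (Fin d × Fin 2) × (Fin d × Fin 2)) :
    link2PF (flipSwitchChoi d) C1 C2 u ((m, c), (n, e)) = 0 := by
  rw [flipSwitchChoi_eq_vecMulVec, link2PF_vecMulVec, mul_apply]
  simp [reshapePF, flipSwitchVec_of_ne h]

theorem link2PF_flipSwitchChoi_zero_zero (m n m' n' : Fin d) :
    link2PF (flipSwitchChoi d) C1 C2 ((m, 0), (n, 0)) ((m', 0), (n', 0)) =
      ∑ b1, ∑ b1', C1 (m, b1) (m', b1') * C2 (b1, n) (b1', n') := by
  rw [flipSwitchChoi_eq_vecMulVec, link2PF_vecMulVec, mul_apply]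
  simp [reshapePF, mul_apply, flipSwitchVec_zero_zero, Fintype.sum_prod_type, ite_and,
    apply_ite (starRingEnd ℂ)]
  exact Finset.sum_comm

theorem link2PF_flipSwitchChoi_one_one (m n m' n' : Fin d) :
    link2PF (flipSwitchChoi d) C1 C2 ((m, 1), (n, 1)) ((m', 1), (n', 1)) =
      ∑ a2, ∑ a2', C2 (a2, m) (a2', m') * C1 (n, a2) (n', a2') := by
  rw [flipSwitchChoi_eq_vecMulVec, link2PF_vecMulVec, mul_apply]
  simp [reshapePF, mul_apply, flipSwitchVec_one_one, Fintype.sum_prod_type, ite_and,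
    apply_ite (starRingEnd ℂ), mul_comm]
  exact Finset.sum_comm

theorem sum_link2PF_flipSwitchChoi
    (hC1B : ∀ a a', (∑ b : Fin d, C1 (a, b) (a', b)) = if a = a' then 1 else 0)
    (hC1A : ∀ b b', (∑ a : Fin d, C1 (a, b) (a, b')) = if b = b' then 1 else 0)
    (hC2B : ∀ a a', (∑ b : Fin d, C2 (a, b) (a', b)) = if a = a' then 1 else 0)
    (hC2A : ∀ b b', (∑ a : Fin d, C2 (a, b) (a, b')) = if b = b' then 1 else 0)
    (p p' : Fin d × Fin 2) :
    ∑ f : Fin d × Fin 2, link2PF (flipSwitchChoi d) C1 C2 (p, f) (p', f) =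
      if p = p' then 1 else 0 := by
  obtain ⟨m, c⟩ := p
  obtain ⟨m', c'⟩ := p'
  simp only [Fintype.sum_prod_type, Fin.sum_univ_two]
  fin_cases c <;> fin_cases c'
  · simp [link2PF_flipSwitchChoi_of_ne_right, link2PF_flipSwitchChoi_zero_zero,
      sum_sum_sum_mul_eq_sum_diag _ (fun b n b' n' => C2 (b, n) (b', n')) hC2B, hC1B]
  · simp [link2PF_flipSwitchChoi_of_ne_left, link2PF_flipSwitchChoi_of_ne_right]
  · simp [link2PF_flipSwitchChoi_of_ne_left, link2PF_flipSwitchChoi_of_ne_right]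
  · simp [link2PF_flipSwitchChoi_of_ne_left, link2PF_flipSwitchChoi_one_one,
      sum_sum_sum_mul_eq_sum_diag _ (fun a n a' n' => C1 (n, a) (n', a')) hC1A, hC2A]

end FlipSwitch

theorem stmt9_general (d : ℕ)
    (C1 : Matrix (Fin d × Fin d) (Fin d × Fin d) ℂ) (hC1 : C1.PosSemidef)
    (hC1B : ∀ a a', (∑ b : Fin d, C1 (a, b) (a', b)) = if a = a' then 1 else 0)
    (hC1A : ∀ b b', (∑ a : Fin d, C1 (a, b) (a, b')) = if b = b' then 1 else 0)
    (C2 : Matrix (Fin d × Fin d) (Fin d × Fin d) ℂ) (hC2 : C2.PosSemidef)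
    (hC2B : ∀ a a', (∑ b : Fin d, C2 (a, b) (a', b)) = if a = a' then 1 else 0)
    (hC2A : ∀ b b', (∑ a : Fin d, C2 (a, b) (a, b')) = if b = b' then 1 else 0) :
    (link2PF (flipSwitchChoi d) C1 C2).PosSemidef ∧
    (∀ p p' : Fin d × Fin 2,
      (∑ f : Fin d × Fin 2, link2PF (flipSwitchChoi d) C1 C2 (p, f) (p', f)) =
        if p = p' then 1 else 0) :=
  ⟨posSemidef_link2PF_vecMulVec _ hC1 hC2,
    sum_link2PF_flipSwitchChoi C1 C2 hC1B hC1A hC2B hC2A⟩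

/-- the flippable quantum SWITCH maps every pair of bistochastic channel
Choi operators `C1`, `C2` to the Choi operator of a quantum channel from
`P = Fin d × Fin 2` to `F = Fin d × Fin 2`: `W` is PSD and `Tr_F[W] = 1_P`. -/
theorem stmt9 (d : ℕ) (hd : 1 ≤ d)
    (C1 : Matrix (Fin d × Fin d) (Fin d × Fin d) ℂ) (hC1 : C1.PosSemidef)
    (hC1B : ∀ a a', (∑ b : Fin d, C1 (a, b) (a', b)) = if a = a' then 1 else 0)
    (hC1A : ∀ b b', (∑ a : Fin d, C1 (a, b) (a, b')) = if b = b' then 1 else 0)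
    (C2 : Matrix (Fin d × Fin d) (Fin d × Fin d) ℂ) (hC2 : C2.PosSemidef)
    (hC2B : ∀ a a', (∑ b : Fin d, C2 (a, b) (a', b)) = if a = a' then 1 else 0)
    (hC2A : ∀ b b', (∑ a : Fin d, C2 (a, b) (a, b')) = if b = b' then 1 else 0) :
    (link2PF (flipSwitchChoi d) C1 C2).PosSemidef ∧
    (∀ p p' : Fin d × Fin 2,
      (∑ f : Fin d × Fin 2, link2PF (flipSwitchChoi d) C1 C2 (p, f) (p', f)) =
        if p = p' then 1 else 0) :=
  stmt9_general d C1 hC1 hC1B hC1A C2 hC2 hC2B hC2A
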